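/- arXiv:2403.20243 — 2 statements merged into one kernel-verified Lean document; each statement's English description precedes it below -/
import Mathlib

section
/- Let E be a real vector space, let V₁ and V₂ be finite-dimensional real vector spaces equipped with nondegenerate quadratic forms Q₁ and Q₂ respectively, and let A₁ : E → V₁ and A₂ : E → V₂ be surjective linear maps. Assume Q₁(A₁(h)) = Q₂(A₂(h)) for every h ∈ E. Then ker(A₁) = ker(A₂), dim V₁ = dim V₂, and the quadratic forms Q₁ and Q₂ are isometrically equivalent: there exists a linear equivalence e : V₁ ≃ V₂ such that Q₂(e(v)) = Q₁(v) for all v ∈ V₁ (in particular Q₁ and Q₂ have the same index). -/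
/-- Let `Q₁, Q₂` be nondegenerate quadratic forms on finite-dimensional
real vector spaces `V₁, V₂` (nondegenerate: the associated polar bilinear form is
nondegenerate), and let `A₁ : E → V₁`, `A₂ : E → V₂` be surjective linear maps with
`Q₁(A₁ h) = Q₂(A₂ h)` for all `h`. Then `ker A₁ = ker A₂`, `dim V₁ = dim V₂`, and `Q₁`
and `Q₂` are isometrically equivalent (hence have the same index). -/
theorem stmt5 {E V₁ V₂ : Type*} [AddCommGroup E] [Module ℝ E]
    [AddCommGroup V₁] [Module ℝ V₁] [FiniteDimensional ℝ V₁]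
    [AddCommGroup V₂] [Module ℝ V₂] [FiniteDimensional ℝ V₂]
    (Q₁ : QuadraticForm ℝ V₁) (Q₂ : QuadraticForm ℝ V₂)
    (hQ₁ : ∀ v : V₁, (∀ w : V₁, (Q₁ (v + w) - Q₁ v - Q₁ w) / 2 = 0) → v = 0)
    (hQ₂ : ∀ v : V₂, (∀ w : V₂, (Q₂ (v + w) - Q₂ v - Q₂ w) / 2 = 0) → v = 0)
    (A₁ : E →ₗ[ℝ] V₁) (A₂ : E →ₗ[ℝ] V₂)
    (hA₁ : Function.Surjective A₁) (hA₂ : Function.Surjective A₂)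
    (heq : ∀ h : E, Q₁ (A₁ h) = Q₂ (A₂ h)) :
    LinearMap.ker A₁ = LinearMap.ker A₂ ∧
    Module.finrank ℝ V₁ = Module.finrank ℝ V₂ ∧
    ∃ e : V₁ ≃ₗ[ℝ] V₂, ∀ v : V₁, Q₂ (e v) = Q₁ v := by
  have hker : LinearMap.ker A₁ = LinearMap.ker A₂ := by
    ext h
    simp only [LinearMap.mem_ker]
    constructor
    · intro h1
      apply hQ₂
      intro w
      obtain ⟨h', rfl⟩ := hA₂ w
      have : A₂ h + A₂ h' = A₂ (h + h') := (map_add A₂ h h').symm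
      rw [this, ← heq, ← heq, ← heq, map_add, h1, zero_add]
      simp
    · intro h2
      apply hQ₁
      intro w
      obtain ⟨h', rfl⟩ := hA₁ w
      have : A₁ h + A₁ h' = A₁ (h + h') := (map_add A₁ h h').symm
      rw [this, heq, heq, heq, map_add, h2, zero_add]
      simp
  set e₁ := A₁.quotKerEquivOfSurjective hA₁
  set e₂ := A₂.quotKerEquivOfSurjective hA₂
  let q : (E ⧸ LinearMap.ker A₁) ≃ₗ[ℝ] (E ⧸ LinearMap.ker A₂) :=
    Submodule.quotEquivOfEq _ _ hker
  let e : V₁ ≃ₗ[ℝ] V₂ := e₁.symm.trans (q.trans e₂)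
  have key : ∀ h : E, e (A₁ h) = A₂ h := by
    intro h
    have h1 : e₁ (Submodule.Quotient.mk h) = A₁ h := rfl
    have h2 : e₂ (Submodule.Quotient.mk h) = A₂ h := rfl
    have hq : q (Submodule.Quotient.mk h) = Submodule.Quotient.mk h := rfl
    simp only [e, LinearEquiv.trans_apply, ← h1, LinearEquiv.symm_apply_apply, hq, h2]
  refine ⟨hker, LinearEquiv.finrank_eq e, e, fun v => ?_⟩
  obtain ⟨h, rfl⟩ := hA₁ v
  rw [key, heq]
end

section
/- Let f : ℝ → ℝ be a differentiable function satisfying f(θ + π) = −f(θ) for all θ ∈ ℝ (so in particular f is 2π-periodic), and suppose every zero of f is nondegenerate: f(θ) = 0 implies f'(θ) ≠ 0. Then the set {θ ∈ [0, 2π) : f(θ) = 0} is finite and its cardinality equals 2 + 4n for some n ∈ ℕ. -/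
/-!
Nondegenerate zeros are isolated, so `f` has finitely many zeros in a compact interval, and `f`
changes sign at each of them. Hence if `f a ≠ 0`, the number of zeros in `(a, a + π)` is odd,
because `f (a + π) = -f a`. The zero set is `π`-periodic, so every window `[a, a + π)` contains the
same number of zeros, and `[0, 2π)` is the union of two such windows: the count is twice an odd
number.
-/

open Set Filter Function Topology

section SignChange

variable {f : ℝ → ℝ} {f' x : ℝ}

lemma HasDerivAt.eventually_sign_slope_eq (hf : HasDerivAt f f' x) (hf' : f' ≠ 0) :
    ∀ᶠ y in 𝓝[≠] x, SignType.sign (slope f x y) = SignType.sign f' := by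
  have h := (continuousAt_sign_of_ne_zero hf').tendsto.comp (hasDerivAt_iff_tendsto_slope.mp hf)
  rw [nhds_discrete] at h
  exact tendsto_pure.mp h

lemma HasDerivAt.eventually_nhdsGT_sign_eq (hf : HasDerivAt f f' x) (hx : f x = 0)
    (hf' : f' ≠ 0) : ∀ᶠ y in 𝓝[>] x, SignType.sign (f y) = SignType.sign f' := by
  filter_upwards [nhdsWithin_mono x (fun y hy => ne_of_gt hy) (hf.eventually_sign_slope_eq hf'),
    self_mem_nhdsWithin] with y hs hy
  rwa [slope_def_field, hx, sub_zero, div_eq_inv_mul, sign_mul,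
    sign_pos (inv_pos.2 (sub_pos.2 hy)), one_mul] at hs

lemma HasDerivAt.eventually_nhdsLT_sign_eq (hf : HasDerivAt f f' x) (hx : f x = 0)
    (hf' : f' ≠ 0) : ∀ᶠ y in 𝓝[<] x, SignType.sign (f y) = -SignType.sign f' := by
  filter_upwards [nhdsWithin_mono x (fun y hy => ne_of_lt hy) (hf.eventually_sign_slope_eq hf'),
    self_mem_nhdsWithin] with y hs hy
  rw [slope_def_field, hx, sub_zero, div_eq_inv_mul, sign_mul,
    sign_neg (inv_lt_zero.2 (sub_neg.2 hy)), neg_one_mul] at hs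
  rw [← hs, neg_neg]

end SignChange

lemma sign_eq_of_forall_mem_Icc_ne_zero {f : ℝ → ℝ} {a b : ℝ} (hf : ContinuousOn f (Icc a b))
    (hab : a ≤ b) (h : ∀ x ∈ Icc a b, f x ≠ 0) : SignType.sign (f a) = SignType.sign (f b) :=
  isPreconnected_Icc.constant
    (fun x hx => (continuousAt_sign_of_ne_zero (h x hx)).comp_continuousWithinAt (hf x hx))
    (left_mem_Icc.2 hab) (right_mem_Icc.2 hab)

theorem Function.Periodic.ncard_setOf_mem_Ico_eq {𝕜 : Type*} [AddCommGroup 𝕜] [LinearOrder 𝕜]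
    [IsOrderedAddMonoid 𝕜] [Archimedean 𝕜] {p : 𝕜 → Prop} {T : 𝕜} (hp : Periodic p T)
    (hT : 0 < T) (a b : 𝕜) :
    {x ∈ Ico a (a + T) | p x}.ncard = {x ∈ Ico b (b + T) | p x}.ncard := by
  have : Fact (0 < T) := ⟨hT⟩
  have hcircle : ∀ a : 𝕜,
      {x ∈ Ico a (a + T) | p x}.ncard = {y : AddCircle T | hp.lift y}.ncard := by
    intro a
    have hinj : InjOn ((↑) : 𝕜 → AddCircle T) {x ∈ Ico a (a + T) | p x} := fun x hx y hy =>
      (AddCircle.coe_eq_coe_iff_of_mem_Ico hx.1 hy.1).1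
    rw [← hinj.ncard_image]
    congr 1
    ext y
    obtain ⟨x, hx, rfl⟩ := (AddCircle.coe_image_Ico_eq T a).symm ▸ mem_univ y
    constructor
    · rintro ⟨x', hx', hxx'⟩
      simpa [← hxx'] using hx'.2
    · exact fun hy => ⟨x, ⟨hx, hy⟩, rfl⟩
  rw [hcircle a, hcircle b]

theorem Function.Periodic.ncard_setOf_mem_Ico_add_add {𝕜 : Type*} [AddCommGroup 𝕜]
    [LinearOrder 𝕜] [IsOrderedAddMonoid 𝕜] [Archimedean 𝕜] {p : 𝕜 → Prop} {T : 𝕜}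
    (hp : Periodic p T) (hT : 0 < T) (a : 𝕜) (hfin : {x ∈ Ico a (a + T + T) | p x}.Finite) :
    {x ∈ Ico a (a + T + T) | p x}.ncard = 2 * {x ∈ Ico a (a + T) | p x}.ncard := by
  have hsplit : {x ∈ Ico a (a + T + T) | p x} =
      {x ∈ Ico a (a + T) | p x} ∪ {x ∈ Ico (a + T) (a + T + T) | p x} := by
    rw [← Ico_union_Ico_eq_Ico (b := a + T) (le_add_of_nonneg_right hT.le)
      (le_add_of_nonneg_right hT.le)]
    exact sep_union
  rw [hsplit, ncard_union_eq ((Ico_disjoint_Ico_same).mono (sep_subset _ _) (sep_subset _ _))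
    (hfin.subset (hsplit ▸ subset_union_left)) (hfin.subset (hsplit ▸ subset_union_right)),
    ← hp.ncard_setOf_mem_Ico_eq hT a (a + T), two_mul]

section NondegenerateZeros

variable {f : ℝ → ℝ} (hf : Differentiable ℝ f) (hreg : ∀ x, f x = 0 → deriv f x ≠ 0)
include hf hreg

lemma finite_setOf_mem_Icc_eq_zero (a b : ℝ) : {x ∈ Icc a b | f x = 0}.Finite := by
  refine IsCompact.finite (isCompact_Icc.inter_right (isClosed_eq hf.continuous continuous_const))
    (isDiscrete_iff_nhdsNE.2 fun x hx => inf_principal_eq_bot.2 ?_)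
  have hne : ∀ᶠ y in 𝓝[≠] x, f y ≠ f x := (hf x).hasDerivAt.eventually_ne (hreg x hx.2)
  filter_upwards [hne] with y hy hyZ
  exact hy (hyZ.2.trans hx.2.symm)

theorem sign_eq_neg_one_pow_ncard_mul_sign {a b : ℝ} (hab : a < b) (ha : f a ≠ 0)
    (hb : f b ≠ 0) :
    SignType.sign (f b) = (-1) ^ {x ∈ Ioo a b | f x = 0}.ncard * SignType.sign (f a) := by
  classical
  obtain ⟨s, hs⟩ := ((finite_setOf_mem_Icc_eq_zero hf hreg a b).subset
    (t := {x ∈ Ioo a b | f x = 0}) fun _ hx => ⟨Ioo_subset_Icc_self hx.1, hx.2⟩).exists_finset_coe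
  rw [← hs, ncard_coe_finset]
  induction s using Finset.induction_on_max generalizing b with
  | empty =>
    have hno : ∀ x ∈ Icc a b, f x ≠ 0 := by
      rintro x ⟨hax, hxb⟩ hx
      rcases hax.eq_or_lt with rfl | hax
      · exact ha hx
      rcases hxb.eq_or_lt with rfl | hxb
      · exact hb hx
      have : x ∈ {x ∈ Ioo a b | f x = 0} := ⟨⟨hax, hxb⟩, hx⟩
      rw [← hs] at this
      simp at this
    simp [sign_eq_of_forall_mem_Icc_ne_zero hf.continuous.continuousOn hab.le hno]
  | insert m s hlt ih =>
    have hm : m ∈ {x ∈ Ioo a b | f x = 0} := by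
      rw [← hs]
      exact Finset.mem_insert_self m s
    have hm_deriv := (hf m).hasDerivAt
    obtain ⟨c, ⟨⟨hac, hcm⟩, hsc⟩, hc⟩ : ∃ c, (c ∈ Ioo a m ∧ ∀ x ∈ s, x < c) ∧
        SignType.sign (f c) = -SignType.sign (deriv f m) :=
      ((Eventually.and (Ioo_mem_nhdsLT hm.1.1)
        ((s.eventually_all).2 fun x hx => mem_nhdsWithin_of_mem_nhds (Ioi_mem_nhds (hlt x hx)))).and
        (hm_deriv.eventually_nhdsLT_sign_eq hm.2 (hreg m hm.2))).exists
    obtain ⟨e, ⟨hme, heb⟩, he⟩ : ∃ e, e ∈ Ioo m b ∧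
        SignType.sign (f e) = SignType.sign (deriv f m) :=
      (Eventually.and (Ioo_mem_nhdsGT hm.1.2)
        (hm_deriv.eventually_nhdsGT_sign_eq hm.2 (hreg m hm.2))).exists
    have hzeros_c : (s : Set ℝ) = {x ∈ Ioo a c | f x = 0} := by
      ext x
      constructor
      · intro hx
        have hx' : x ∈ {x ∈ Ioo a b | f x = 0} := hs ▸ Finset.mem_insert_of_mem hx
        exact ⟨⟨hx'.1.1, hsc x hx⟩, hx'.2⟩
      · rintro ⟨⟨hax, hxc⟩, hx⟩
        have : x ∈ (insert m s : Set ℝ) := by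
          rw [← Finset.coe_insert, hs]
          exact ⟨⟨hax, hxc.trans (hcm.trans hm.1.2)⟩, hx⟩
        rcases this with rfl | hxs
        · exact absurd hxc hcm.not_gt
        · exact hxs
    have hno : ∀ x ∈ Icc e b, f x ≠ 0 := by
      rintro x ⟨hex, hxb⟩ hx
      rcases hxb.eq_or_lt with rfl | hxb
      · exact hb hx
      have : x ∈ (insert m s : Set ℝ) := by
        rw [← Finset.coe_insert, hs]
        exact ⟨⟨hm.1.1.trans (hme.trans_le hex), hxb⟩, hx⟩
      rcases this with rfl | hxs
      · exact hme.not_ge hex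
      · exact (hlt x hxs).not_ge (hme.le.trans hex)
    have hc0 : f c ≠ 0 := by
      rw [← sign_ne_zero, hc, Ne, SignType.neg_eq_zero_iff, sign_eq_zero_iff]
      exact hreg m hm.2
    calc SignType.sign (f b) = SignType.sign (f e) :=
          (sign_eq_of_forall_mem_Icc_ne_zero hf.continuous.continuousOn heb.le hno).symm
      _ = -SignType.sign (f c) := by rw [he, hc, neg_neg]
      _ = (-1) ^ (insert m s).card * SignType.sign (f a) := by
        rw [ih hac hc0 hzeros_c, Finset.card_insert_of_notMem fun h => (hlt m h).false, pow_succ,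
          mul_neg_one, neg_mul]

theorem odd_ncard_setOf_mem_Ico_eq_zero {T : ℝ} (hanti : Antiperiodic f T) (hT : 0 < T) {a : ℝ}
    (ha : f a ≠ 0) : Odd {x ∈ Ico a (a + T) | f x = 0}.ncard := by
  have hIoo : {x ∈ Ico a (a + T) | f x = 0} = {x ∈ Ioo a (a + T) | f x = 0} := by
    ext x
    refine ⟨fun ⟨⟨hax, hxT⟩, hx⟩ => ⟨⟨hax.lt_of_ne ?_, hxT⟩, hx⟩,
      fun ⟨hx', hx⟩ => ⟨Ioo_subset_Ico_self hx', hx⟩⟩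
    rintro rfl
    exact ha hx
  have hsign := sign_eq_neg_one_pow_ncard_mul_sign hf hreg (lt_add_of_pos_right a hT) ha
    (by rw [hanti a]; exact neg_ne_zero.2 ha)
  rw [hanti a, Left.sign_neg, ← hIoo] at hsign
  refine (Nat.even_or_odd _).resolve_left fun he => ?_
  rw [he.neg_one_pow, one_mul] at hsign
  have hsign_ne := sign_ne_zero.2 ha
  revert hsign hsign_ne
  generalize SignType.sign (f a) = s
  decide +revert

end NondegenerateZeros

/-- Let `f : ℝ → ℝ` be differentiable with `f(θ + π) = −f(θ)` for all
`θ`, and suppose every zero of `f` is nondegenerate (`f θ = 0 → f' θ ≠ 0`). Then the set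
of zeros of `f` in `[0, 2π)` is finite, with cardinality of the form `2 + 4n`. -/
theorem stmt13 (f : ℝ → ℝ) (hf : Differentiable ℝ f)
    (hanti : ∀ θ : ℝ, f (θ + Real.pi) = -f θ)
    (hreg : ∀ θ : ℝ, f θ = 0 → deriv f θ ≠ 0) :
    ({θ ∈ Set.Ico (0 : ℝ) (2 * Real.pi) | f θ = 0}).Finite ∧
    ∃ n : ℕ, ({θ ∈ Set.Ico (0 : ℝ) (2 * Real.pi) | f θ = 0}).ncard = 2 + 4 * n := by
  have hfin : {θ ∈ Ico (0 : ℝ) (2 * Real.pi) | f θ = 0}.Finite :=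
    (finite_setOf_mem_Icc_eq_zero hf hreg 0 (2 * Real.pi)).subset
      fun x hx => ⟨Ico_subset_Icc_self hx.1, hx.2⟩
  refine ⟨hfin, ?_⟩
  obtain ⟨a, ha⟩ : ∃ a, f a ≠ 0 := by
    by_contra! h
    exact hreg 0 (h 0) (by simp [funext h])
  have hzeros : Periodic (fun θ => f θ = 0) Real.pi := fun θ => by simp [hanti]
  obtain ⟨n, hn⟩ := odd_ncard_setOf_mem_Ico_eq_zero hf hreg hanti Real.pi_pos ha
  have hcount := hzeros.ncard_setOf_mem_Ico_add_add Real.pi_pos 0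
    (by rwa [zero_add, ← two_mul])
  rw [hzeros.ncard_setOf_mem_Ico_eq Real.pi_pos 0 a, hn, zero_add, ← two_mul] at hcount
  exact ⟨n, by rw [hcount]; ring⟩
end
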